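/- Let v ∈ V_h^0. Then −(H_y δ_x² v, v) ≥ (2/3)‖δ_x v‖_x², −(H_x δ_y² v, v) ≥ (2/3)‖δ_y v‖_y², and (4/9)‖v‖ ≤ ‖H_h v‖ ≤ ‖v‖. -/

import Mathlib

open Finset

noncomputable section

/-- A grid function on the `(M_x+1) × (M_y+1)` grid, represented as a total function
(only the values at indices `0 ≤ i ≤ M_x`, `0 ≤ j ≤ M_y` are relevant). -/
abbrev GridFn : Type := ℕ → ℕ → ℝ

/-- Spatial stepsize `h_x = 1/M_x`. -/
def hx (Mx : ℕ) : ℝ := ((Mx : ℝ))⁻¹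

/-- Spatial stepsize `h_y = 1/M_y`. -/
def hy (My : ℕ) : ℝ := ((My : ℝ))⁻¹

/-- Second-order difference in the x-direction:
`δ_x² v_{i,j} = (v_{i+1,j} − 2v_{i,j} + v_{i−1,j})/h_x²` (used for `1 ≤ i ≤ M_x−1`). -/
def dxx (Mx : ℕ) (v : GridFn) : GridFn := fun i j =>
  (v (i + 1) j - 2 * v i j + v (i - 1) j) / (hx Mx) ^ 2

/-- Second-order difference in the y-direction. -/
def dyy (My : ℕ) (v : GridFn) : GridFn := fun i j =>
  (v i (j + 1) - 2 * v i j + v i (j - 1)) / (hy My) ^ 2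

/-- Compact operator `H_x`: `H_x v_{i,j} = v_{i,j} + (h_x²/12) δ_x² v_{i,j}` for
`1 ≤ i ≤ M_x−1`, and `H_x v_{i,j} = v_{i,j}` for `i ∈ {0, M_x}`. -/
def Hcx (Mx : ℕ) (v : GridFn) : GridFn := fun i j =>
  if 1 ≤ i ∧ i ≤ Mx - 1 then v i j + (hx Mx) ^ 2 / 12 * dxx Mx v i j else v i j

/-- Compact operator `H_y`. -/
def Hcy (My : ℕ) (v : GridFn) : GridFn := fun i j =>
  if 1 ≤ j ∧ j ≤ My - 1 then v i j + (hy My) ^ 2 / 12 * dyy My v i j else v i j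

/-- Compact operator `H_h = H_x H_y`. -/
def Hch (Mx My : ℕ) (v : GridFn) : GridFn := Hcx Mx (Hcy My v)

/-- `Λ_h v = H_y(δ_x² v) + H_x(δ_y² v)` (at interior indices). -/
def Lamh (Mx My : ℕ) (v : GridFn) : GridFn := fun i j =>
  Hcy My (dxx Mx v) i j + Hcx Mx (dyy My v) i j

/-- Discrete L² inner product
`(v,w) = h_x h_y Σ_{i=1}^{M_x−1} Σ_{j=1}^{M_y−1} v_{i,j} w_{i,j}`. -/
def innp (Mx My : ℕ) (v w : GridFn) : ℝ :=
  hx Mx * hy My * ∑ i ∈ Icc 1 (Mx - 1), ∑ j ∈ Icc 1 (My - 1), v i j * w i j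

/-- Discrete L² norm `‖v‖ = (v,v)^{1/2}`. -/
def nrm (Mx My : ℕ) (v : GridFn) : ℝ := Real.sqrt (innp Mx My v v)

/-- Discrete maximum norm `‖v‖_∞ = max_{1≤i≤M_x−1, 1≤j≤M_y−1} |v_{i,j}|`. -/
def nrmInf (Mx My : ℕ) (v : GridFn) : ℝ :=
  ((Icc 1 (Mx - 1)) ×ˢ (Icc 1 (My - 1))).fold max 0 fun p => |v p.1 p.2|

/-- `‖δ_x v‖_x² = h_x h_y Σ_{i=1}^{M_x} Σ_{j=1}^{M_y−1} (δ_x v_{i−1/2,j})²`. -/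
def nrmX2 (Mx My : ℕ) (v : GridFn) : ℝ :=
  hx Mx * hy My * ∑ i ∈ Icc 1 Mx, ∑ j ∈ Icc 1 (My - 1),
    ((v i j - v (i - 1) j) / hx Mx) ^ 2

/-- `‖δ_y v‖_y² = h_x h_y Σ_{i=1}^{M_x−1} Σ_{j=1}^{M_y} (δ_y v_{i,j−1/2})²`. -/
def nrmY2 (Mx My : ℕ) (v : GridFn) : ℝ :=
  hx Mx * hy My * ∑ i ∈ Icc 1 (Mx - 1), ∑ j ∈ Icc 1 My,
    ((v i j - v i (j - 1)) / hy My) ^ 2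

/-- Membership in `V_h^0`: a grid function vanishing on the boundary of the grid. -/
def BZero (Mx My : ℕ) (v : GridFn) : Prop :=
  ∀ i ≤ Mx, ∀ j ≤ My, (i = 0 ∨ i = Mx ∨ j = 0 ∨ j = My) → v i j = 0

/-- Interior grid indices: `1 ≤ i ≤ M_x−1`, `1 ≤ j ≤ M_y−1`. -/
def interiorIdx (Mx My i j : ℕ) : Prop :=
  1 ≤ i ∧ i ≤ Mx - 1 ∧ 1 ≤ j ∧ j ≤ My - 1

/-- Time average `w̄^{n−1/2} = (w^n + w^{n−1})/2` of a sequence of grid functions. -/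
def tbar (u : ℕ → GridFn) (n : ℕ) : GridFn := fun i j => (u n i j + u (n - 1) i j) / 2

/-- Time difference `δ_t w^{n−1/2} = (w^n − w^{n−1})/τ` of a sequence of grid functions. -/
def tdiff (τ : ℝ) (u : ℕ → GridFn) (n : ℕ) : GridFn := fun i j =>
  (u n i j - u (n - 1) i j) / τ

/-- Extrapolation `l^{*,1} = l⁰`, `l^{*,n} = (3 l^{n−1} − l^{n−2})/2` for `n ≥ 2`. -/
def extrap (u : ℕ → GridFn) (n : ℕ) : GridFn :=
  if n = 1 then u 0 else fun i j => (3 * u (n - 1) i j - u (n - 2) i j) / 2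


/-!
On a grid line vanishing at both ends, `H = I + (h²/12) δ²` is the averaging operator
`w ↦ (w_{i+1} + 10 w_i + w_{i-1}) / 12`. Jensen's inequality gives `‖H w‖ ≤ ‖w‖`; the bound
`2 |w_{i±1} w_i| ≤ w_{i±1}² + w_i²` gives `(H w, w) ≥ (2/3) ‖w‖²`, hence `‖H w‖ ≥ (2/3) ‖w‖` by
Cauchy–Schwarz, and applying both directions in turn bounds `H_h = H_x H_y`. Since `H_y` commutes
with `δ_x²`, summation by parts in `x` turns `-(H_y δ_x² v, v)` into `(H_y δ_x v, δ_x v)`, which is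
at least `(2/3) ‖δ_x v‖_x²` by the one-dimensional bound along each column. Transposing the grid
gives the statements in `y`.
-/

open Function

section OneDim

variable (a b w : ℕ → ℝ) (m : ℕ)

def secondDiff (i : ℕ) : ℝ := a (i + 1) - 2 * a i + a (i - 1)

def compactAvg (i : ℕ) : ℝ := (a (i + 1) + 10 * a i + a (i - 1)) / 12

lemma sum_Icc_secondDiff_mul :
    ∑ i ∈ Icc 1 m, secondDiff a i * b i
      = (a (m + 1) - a m) * b m - (a 1 - a 0) * b 0
        - ∑ i ∈ Icc 1 m, (a i - a (i - 1)) * (b i - b (i - 1)) := by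
  induction m with
  | zero => simp
  | succ m ih =>
    rw [sum_Icc_succ_top (by omega), sum_Icc_succ_top (by omega), ih]
    simp only [secondDiff, Nat.add_sub_cancel]
    ring

variable {a b w m}

lemma sum_Icc_secondDiff_mul_of_eq_zero (hb₀ : b 0 = 0) (hb : b (m + 1) = 0) :
    ∑ i ∈ Icc 1 m, secondDiff a i * b i
      = -∑ i ∈ Icc 1 (m + 1), (a i - a (i - 1)) * (b i - b (i - 1)) := by
  rw [sum_Icc_secondDiff_mul, sum_Icc_succ_top (by omega), hb₀, hb, Nat.add_sub_cancel]
  ring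

lemma sum_Icc_succ_add (f : ℕ → ℝ) :
    ∑ i ∈ Icc 1 m, f (i + 1) + f 1 = ∑ i ∈ Icc 1 m, f i + f (m + 1) := by
  induction m with
  | zero => simp
  | succ m ih => rw [sum_Icc_succ_top (by omega), sum_Icc_succ_top (by omega)]; linarith

lemma sum_Icc_pred_add (f : ℕ → ℝ) :
    ∑ i ∈ Icc 1 m, f (i - 1) + f m = ∑ i ∈ Icc 1 m, f i + f 0 := by
  induction m with
  | zero => simp
  | succ m ih =>
    rw [sum_Icc_succ_top (by omega), sum_Icc_succ_top (by omega), Nat.add_sub_cancel]; linarith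

lemma sum_Icc_sq_succ_le (hw : w (m + 1) = 0) :
    ∑ i ∈ Icc 1 m, w (i + 1) ^ 2 ≤ ∑ i ∈ Icc 1 m, w i ^ 2 := by
  have := sum_Icc_succ_add (m := m) (fun i => w i ^ 2)
  simp only [hw] at this
  nlinarith [sq_nonneg (w 1)]

lemma sum_Icc_sq_pred_le (hw : w 0 = 0) :
    ∑ i ∈ Icc 1 m, w (i - 1) ^ 2 ≤ ∑ i ∈ Icc 1 m, w i ^ 2 := by
  have := sum_Icc_pred_add (m := m) (fun i => w i ^ 2)
  simp only [hw] at this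
  nlinarith [sq_nonneg (w m)]

lemma compactAvg_sq_le (i : ℕ) :
    compactAvg w i ^ 2 ≤ (w (i + 1) ^ 2 + 10 * w i ^ 2 + w (i - 1) ^ 2) / 12 := by
  unfold compactAvg
  nlinarith [sq_nonneg (w (i + 1) - w i), sq_nonneg (w i - w (i - 1)),
    sq_nonneg (w (i + 1) - w (i - 1))]

lemma le_compactAvg_mul_self (i : ℕ) :
    (18 * w i ^ 2 - w (i + 1) ^ 2 - w (i - 1) ^ 2) / 24 ≤ compactAvg w i * w i := by
  unfold compactAvg
  nlinarith [sq_nonneg (w (i + 1) + w i), sq_nonneg (w i + w (i - 1))]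

lemma sum_compactAvg_sq_le (h₀ : w 0 = 0) (hm : w (m + 1) = 0) :
    ∑ i ∈ Icc 1 m, compactAvg w i ^ 2 ≤ ∑ i ∈ Icc 1 m, w i ^ 2 := by
  have hsucc := sum_Icc_sq_succ_le hm
  have hpred := sum_Icc_sq_pred_le (m := m) h₀
  calc ∑ i ∈ Icc 1 m, compactAvg w i ^ 2
      ≤ ∑ i ∈ Icc 1 m, (w (i + 1) ^ 2 + 10 * w i ^ 2 + w (i - 1) ^ 2) / 12 :=
        sum_le_sum fun i _ => compactAvg_sq_le i
    _ ≤ ∑ i ∈ Icc 1 m, w i ^ 2 := by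
        simp only [← sum_div, sum_add_distrib, ← mul_sum]
        linarith

lemma two_thirds_mul_sum_sq_le_sum_compactAvg_mul (h₀ : w 0 = 0) (hm : w (m + 1) = 0) :
    2 / 3 * ∑ i ∈ Icc 1 m, w i ^ 2 ≤ ∑ i ∈ Icc 1 m, compactAvg w i * w i := by
  have hsucc := sum_Icc_sq_succ_le hm
  have hpred := sum_Icc_sq_pred_le (m := m) h₀
  calc 2 / 3 * ∑ i ∈ Icc 1 m, w i ^ 2
      ≤ ∑ i ∈ Icc 1 m, (18 * w i ^ 2 - w (i + 1) ^ 2 - w (i - 1) ^ 2) / 24 := by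
        simp only [← sum_div, sum_sub_distrib, ← mul_sum]
        linarith
    _ ≤ ∑ i ∈ Icc 1 m, compactAvg w i * w i := sum_le_sum fun i _ => le_compactAvg_mul_self i

lemma four_ninths_mul_sum_sq_le_sum_compactAvg_sq (h₀ : w 0 = 0) (hm : w (m + 1) = 0) :
    4 / 9 * ∑ i ∈ Icc 1 m, w i ^ 2 ≤ ∑ i ∈ Icc 1 m, compactAvg w i ^ 2 := by
  have hpos := two_thirds_mul_sum_sq_le_sum_compactAvg_mul h₀ hm
  have hcs := sum_mul_sq_le_sq_mul_sq (Icc 1 m) (compactAvg w) w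
  rcases (sum_nonneg fun i _ => sq_nonneg (w i) : 0 ≤ ∑ i ∈ Icc 1 m, w i ^ 2).eq_or_lt with hS | hS
  · rw [← hS, mul_zero]
    exact sum_nonneg fun i _ => sq_nonneg _
  · exact le_of_mul_le_mul_right (by nlinarith) hS

end OneDim

section Grid

variable {Mx My : ℕ} {v w : GridFn}

lemma BZero.left_eq_zero (hv : BZero Mx My v) {j : ℕ} (hj : j ≤ My) : v 0 j = 0 :=
  hv 0 (Nat.zero_le _) j hj (.inl rfl)

lemma BZero.right_eq_zero (hv : BZero Mx My v) {j : ℕ} (hj : j ≤ My) : v Mx j = 0 :=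
  hv Mx le_rfl j hj (.inr (.inl rfl))

lemma BZero.bottom_eq_zero (hv : BZero Mx My v) {i : ℕ} (hi : i ≤ Mx) : v i 0 = 0 :=
  hv i hi 0 (Nat.zero_le _) (.inr (.inr (.inl rfl)))

lemma BZero.top_eq_zero (hv : BZero Mx My v) {i : ℕ} (hi : i ≤ Mx) : v i My = 0 :=
  hv i hi My le_rfl (.inr (.inr (.inr rfl)))

lemma BZero.swap (hv : BZero Mx My v) : BZero My Mx (swap v) :=
  fun i hi j hj hij => hv j hj i hi (by tauto)

lemma innp_swap (u w : GridFn) : innp Mx My (swap u) (swap w) = innp My Mx u w := by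
  simp only [innp, hx, hy]
  rw [sum_comm, mul_comm ((Mx : ℝ)⁻¹)]

lemma nrm_swap (w : GridFn) : nrm Mx My (swap w) = nrm My Mx w := by
  rw [nrm, innp_swap, nrm]

lemma nrmX2_swap (v : GridFn) : nrmX2 My Mx (swap v) = nrmY2 Mx My v := by
  simp only [nrmX2, nrmY2, hx, hy]
  rw [sum_comm, mul_comm ((My : ℝ)⁻¹)]

lemma Hcy_eq_compactAvg (w : GridFn) {i j : ℕ} (hj : 1 ≤ j ∧ j ≤ My - 1) :
    Hcy My w i j = compactAvg (w i) j := by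
  have hMy : (My : ℝ) ≠ 0 := by exact_mod_cast (by omega : My ≠ 0)
  simp only [Hcy, if_pos hj, dyy, compactAvg, hy]
  field_simp
  ring

-- `Hcx` is `Hcy` on the transposed grid up to unfolding, since `hx` and `hy` are the same function.
lemma Hcx_eq_compactAvg (w : GridFn) {i j : ℕ} (hi : 1 ≤ i ∧ i ≤ Mx - 1) :
    Hcx Mx w i j = compactAvg (fun k => w k j) i :=
  Hcy_eq_compactAvg (swap w) hi

lemma Hcy_eq_zero (hw : ∀ k ≤ My, w i k = 0) {j : ℕ} (hj : j ≤ My) : Hcy My w i j = 0 := by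
  unfold Hcy dyy
  split_ifs
  · rw [hw j hj, hw (j + 1) (by omega), hw (j - 1) (by omega)]
    ring
  · exact hw j hj

lemma hx_mul_hy_nonneg (Mx My : ℕ) : 0 ≤ hx Mx * hy My := by
  unfold hx hy
  positivity

lemma innp_self_eq_sum (w : GridFn) :
    innp Mx My w w = hx Mx * hy My * ∑ j ∈ Icc 1 (My - 1), ∑ i ∈ Icc 1 (Mx - 1), w i j ^ 2 := by
  simp only [innp, sq]
  rw [sum_comm]

lemma innp_self_Hcx (w : GridFn) :
    innp Mx My (Hcx Mx w) (Hcx Mx w)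
      = hx Mx * hy My * ∑ j ∈ Icc 1 (My - 1), ∑ i ∈ Icc 1 (Mx - 1),
          compactAvg (fun k => w k j) i ^ 2 := by
  rw [innp_self_eq_sum]
  congr 1
  refine sum_congr rfl fun j _ => sum_congr rfl fun i hi => ?_
  rw [Hcx_eq_compactAvg w (mem_Icc.1 hi)]

lemma nrm_Hcx_le (hMx : 0 < Mx) (hw : ∀ j ∈ Icc 1 (My - 1), w 0 j = 0 ∧ w Mx j = 0) :
    nrm Mx My (Hcx Mx w) ≤ nrm Mx My w := by
  obtain ⟨m, rfl⟩ : ∃ m, Mx = m + 1 := ⟨Mx - 1, by omega⟩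
  refine Real.sqrt_le_sqrt ?_
  rw [innp_self_Hcx, innp_self_eq_sum, Nat.add_sub_cancel]
  refine mul_le_mul_of_nonneg_left (sum_le_sum fun j hj => ?_) (hx_mul_hy_nonneg _ _)
  exact sum_compactAvg_sq_le (hw j hj).1 (hw j hj).2

lemma two_thirds_mul_nrm_le_nrm_Hcx (hMx : 0 < Mx)
    (hw : ∀ j ∈ Icc 1 (My - 1), w 0 j = 0 ∧ w Mx j = 0) :
    2 / 3 * nrm Mx My w ≤ nrm Mx My (Hcx Mx w) := by
  obtain ⟨m, rfl⟩ : ∃ m, Mx = m + 1 := ⟨Mx - 1, by omega⟩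
  calc 2 / 3 * nrm (m + 1) My w = √(4 / 9 * innp (m + 1) My w w) := by
        rw [Real.sqrt_mul (by norm_num), show (4 / 9 : ℝ) = (2 / 3) ^ 2 by norm_num,
          Real.sqrt_sq (by norm_num), nrm]
    _ ≤ nrm (m + 1) My (Hcx (m + 1) w) := by
        refine Real.sqrt_le_sqrt ?_
        rw [innp_self_Hcx, innp_self_eq_sum, Nat.add_sub_cancel, mul_left_comm, mul_sum]
        refine mul_le_mul_of_nonneg_left (sum_le_sum fun j hj => ?_) (hx_mul_hy_nonneg _ _)
        exact four_ninths_mul_sum_sq_le_sum_compactAvg_sq (hw j hj).1 (hw j hj).2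

lemma nrm_Hcy_le (hMy : 0 < My) (hw : ∀ i ∈ Icc 1 (Mx - 1), w i 0 = 0 ∧ w i My = 0) :
    nrm Mx My (Hcy My w) ≤ nrm Mx My w :=
  calc nrm Mx My (Hcy My w) = nrm My Mx (Hcx My (swap w)) := nrm_swap _
    _ ≤ nrm My Mx (swap w) := nrm_Hcx_le hMy hw
    _ = nrm Mx My w := (nrm_swap (swap w)).symm

lemma two_thirds_mul_nrm_le_nrm_Hcy (hMy : 0 < My)
    (hw : ∀ i ∈ Icc 1 (Mx - 1), w i 0 = 0 ∧ w i My = 0) :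
    2 / 3 * nrm Mx My w ≤ nrm Mx My (Hcy My w) :=
  calc 2 / 3 * nrm Mx My w = 2 / 3 * nrm My Mx (swap w) := by rw [← nrm_swap (swap w)]
    _ ≤ nrm My Mx (Hcx My (swap w)) := two_thirds_mul_nrm_le_nrm_Hcx hMy hw
    _ = nrm Mx My (Hcy My w) := (nrm_swap _).symm

lemma Hcy_dxx_eq (v : GridFn) {i j : ℕ} (hj : 1 ≤ j ∧ j ≤ My - 1) :
    Hcy My (dxx Mx v) i j = secondDiff (fun k => compactAvg (v k) j) i / hx Mx ^ 2 := by
  rw [Hcy_eq_compactAvg _ hj]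
  simp only [compactAvg, secondDiff, dxx]
  ring

lemma innp_Hcy_dxx (v : GridFn) :
    innp Mx My (Hcy My (dxx Mx v)) v
      = hx Mx * hy My / hx Mx ^ 2 * ∑ j ∈ Icc 1 (My - 1), ∑ i ∈ Icc 1 (Mx - 1),
          secondDiff (fun k => compactAvg (v k) j) i * v i j := by
  rw [innp, sum_comm, mul_sum, mul_sum]
  refine sum_congr rfl fun j hj => ?_
  rw [mul_sum, mul_sum]
  refine sum_congr rfl fun i _ => ?_
  rw [Hcy_dxx_eq v (mem_Icc.1 hj)]
  ring

lemma nrmX2_eq (v : GridFn) :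
    nrmX2 Mx My v = hx Mx * hy My / hx Mx ^ 2 * ∑ i ∈ Icc 1 Mx, ∑ j ∈ Icc 1 (My - 1),
      (v i j - v (i - 1) j) ^ 2 := by
  rw [nrmX2, mul_sum, mul_sum]
  refine sum_congr rfl fun i _ => ?_
  rw [mul_sum, mul_sum]
  refine sum_congr rfl fun j _ => ?_
  ring

lemma sum_secondDiff_compactAvg_mul {m n : ℕ} (hv : BZero (m + 1) (n + 1) v) :
    ∑ j ∈ Icc 1 n, ∑ i ∈ Icc 1 m, secondDiff (fun k => compactAvg (v k) j) i * v i j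
      = -∑ i ∈ Icc 1 (m + 1), ∑ j ∈ Icc 1 n,
          compactAvg (fun l => v i l - v (i - 1) l) j * (v i j - v (i - 1) j) := by
  rw [sum_comm (s := Icc 1 (m + 1)), ← sum_neg_distrib]
  refine sum_congr rfl fun j hj => ?_
  have hj' := (mem_Icc.1 hj).2
  rw [sum_Icc_secondDiff_mul_of_eq_zero (b := fun i => v i j) (hv.left_eq_zero (by omega))
    (hv.right_eq_zero (by omega))]
  congr 1
  refine sum_congr rfl fun i _ => ?_
  simp only [compactAvg]
  ring

lemma two_thirds_nrmX2_le_neg_innp_Hcy_dxx (hMx : 0 < Mx) (hMy : 0 < My)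
    (hv : BZero Mx My v) :
    2 / 3 * nrmX2 Mx My v ≤ -innp Mx My (Hcy My (dxx Mx v)) v := by
  obtain ⟨m, rfl⟩ : ∃ m, Mx = m + 1 := ⟨Mx - 1, by omega⟩
  obtain ⟨n, rfl⟩ : ∃ n, My = n + 1 := ⟨My - 1, by omega⟩
  rw [nrmX2_eq, innp_Hcy_dxx, Nat.add_sub_cancel, Nat.add_sub_cancel,
    sum_secondDiff_compactAvg_mul hv, mul_neg, neg_neg, mul_left_comm, mul_sum]
  refine mul_le_mul_of_nonneg_left (sum_le_sum fun i hi => ?_)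
    (div_nonneg (hx_mul_hy_nonneg _ _) (sq_nonneg _))
  have hi' := (mem_Icc.1 hi).2
  refine two_thirds_mul_sum_sq_le_sum_compactAvg_mul ?_ ?_ <;>
    simp only [hv.bottom_eq_zero hi', hv.bottom_eq_zero (by omega : i - 1 ≤ m + 1),
      hv.top_eq_zero hi', hv.top_eq_zero (by omega : i - 1 ≤ m + 1), sub_self]

lemma two_thirds_nrmY2_le_neg_innp_Hcx_dyy (hMx : 0 < Mx) (hMy : 0 < My)
    (hv : BZero Mx My v) :
    2 / 3 * nrmY2 Mx My v ≤ -innp Mx My (Hcx Mx (dyy My v)) v := by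
  rw [← nrmX2_swap, ← innp_swap]
  exact two_thirds_nrmX2_le_neg_innp_Hcy_dxx hMy hMx hv.swap

end Grid

/-- For `v ∈ V_h^0`: `−(H_y δ_x² v, v) ≥ (2/3)‖δ_x v‖_x²`,
`−(H_x δ_y² v, v) ≥ (2/3)‖δ_y v‖_y²`, and `(4/9)‖v‖ ≤ ‖H_h v‖ ≤ ‖v‖`. -/
theorem stmt6 (Mx My : ℕ) (hMx : 2 ≤ Mx) (hMy : 2 ≤ My) (v : GridFn)
    (hv : BZero Mx My v) :
    2 / 3 * nrmX2 Mx My v ≤ -(innp Mx My (Hcy My (dxx Mx v)) v)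
    ∧ 2 / 3 * nrmY2 Mx My v ≤ -(innp Mx My (Hcx Mx (dyy My v)) v)
    ∧ 4 / 9 * nrm Mx My v ≤ nrm Mx My (Hch Mx My v)
    ∧ nrm Mx My (Hch Mx My v) ≤ nrm Mx My v := by
  have hMx₀ : 0 < Mx := by omega
  have hMy₀ : 0 < My := by omega
  have hvy : ∀ i ∈ Icc 1 (Mx - 1), v i 0 = 0 ∧ v i My = 0 := fun i hi =>
    ⟨hv.bottom_eq_zero (by grind), hv.top_eq_zero (by grind)⟩
  have hHvx : ∀ j ∈ Icc 1 (My - 1), Hcy My v 0 j = 0 ∧ Hcy My v Mx j = 0 := fun j hj =>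
    ⟨Hcy_eq_zero (fun k hk => hv.left_eq_zero hk) (by grind),
      Hcy_eq_zero (fun k hk => hv.right_eq_zero hk) (by grind)⟩
  refine ⟨two_thirds_nrmX2_le_neg_innp_Hcy_dxx hMx₀ hMy₀ hv,
    two_thirds_nrmY2_le_neg_innp_Hcx_dyy hMx₀ hMy₀ hv, ?_, ?_⟩
  · calc 4 / 9 * nrm Mx My v = 2 / 3 * (2 / 3 * nrm Mx My v) := by ring
      _ ≤ 2 / 3 * nrm Mx My (Hcy My v) := by
          gcongr; exact two_thirds_mul_nrm_le_nrm_Hcy hMy₀ hvy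
      _ ≤ nrm Mx My (Hch Mx My v) := two_thirds_mul_nrm_le_nrm_Hcx hMx₀ hHvx
  · exact (nrm_Hcx_le hMx₀ hHvx).trans (nrm_Hcy_le hMy₀ hvy)
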